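/- Let T be an inverse semigroup and A a T-module with structure (θ, η). For n ≥ 1, an n-cochain c ∈ Cⁿ(T¹, A¹) is order-preserving if and only if for all x₁, …, xₙ ∈ T, all 1 ≤ i ≤ n and all e ∈ E(T) one has c(x₁, …, x_{i−1}, e·x_i, x_{i+1}, …, xₙ) = θ(r(x₁ ⋯ x_{i−1} e)) · c(x₁, …, xₙ), where r(s) = s s⁻¹. -/

import Mathlib

/-- An inverse semigroup: every element `s` has a (unique) inverse `s⁻¹`
with `s * s⁻¹ * s = s` and `s⁻¹ * s * s⁻¹ = s⁻¹`. -/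
class InverseSemigroup (S : Type*) extends Semigroup S, Inv S where
  mul_inv_mul : ∀ s : S, s * s⁻¹ * s = s
  inv_mul_inv : ∀ s : S, s⁻¹ * s * s⁻¹ = s⁻¹
  inv_unique : ∀ s t : S, s * t * s = s → t * s * t = t → t = s⁻¹

namespace InverseSemigroup

/-- The set of idempotents of a multiplicative structure. -/
def E (S : Type*) [Mul S] : Set S := {e | e * e = e}

/-- The natural partial order: `s ≤ t` iff `s = s * s⁻¹ * t`. -/
def nle {S : Type*} [Mul S] [Inv S] (s t : S) : Prop := s = s * s⁻¹ * t

/-- `r s = s * s⁻¹`. -/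
def r {S : Type*} [Mul S] [Inv S] (s : S) : S := s * s⁻¹

/-- A Clifford semigroup (semilattice of groups): idempotents are central. -/
def IsClifford (S : Type*) [Mul S] : Prop := ∀ e ∈ E S, ∀ s : S, e * s = s * e

end InverseSemigroup

open InverseSemigroup

/-- Product of a nonempty tuple in a semigroup. -/
def tupleProd {S : Type*} [Mul S] : ∀ {n : ℕ}, (Fin (n + 1) → S) → S
  | 0, x => x 0
  | _ + 1, x => x 0 * tupleProd (fun i => x i.succ)

/-!
Multiplying one argument of a tuple by an idempotent `e` moves it down in the natural order, and
every pointwise smaller tuple is reached from the larger one by finitely many such moves (with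
`e = r(xᵢ)`). Since `a ≤ b` in `A` means `a = F b` for an idempotent `F`, order preservation of `c`
amounts to `c` turning each move into multiplication by an idempotent. When it does, that
idempotent is forced: `c x (c x)⁻¹ = θ(r(x₁⋯xₙ))`, and the range idempotent of the moved product
is `r(x₁⋯x_{i-1} e) · r(x₁⋯xₙ)`.
-/

open Function

namespace InverseSemigroup

variable {S : Type*} [InverseSemigroup S]

protected theorem inv_inv (s : S) : s⁻¹⁻¹ = s :=
  (inv_unique s⁻¹ s (inv_mul_inv s) (mul_inv_mul s)).symm

theorem inv_eq_self_of_mem_E {e : S} (he : e ∈ E S) : e⁻¹ = e := by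
  have he' : e * e * e = e := by rw [he, he]
  exact (inv_unique e e he' he').symm

theorem r_mem_E (s : S) : r s ∈ E S := by
  show s * s⁻¹ * (s * s⁻¹) = s * s⁻¹
  rw [← mul_assoc, mul_inv_mul]

theorem inv_mul_self_mem_E (s : S) : s⁻¹ * s ∈ E S := by
  show s⁻¹ * s * (s⁻¹ * s) = s⁻¹ * s
  rw [← mul_assoc, inv_mul_inv]

theorem r_mul_self (s : S) : r s * s = s := mul_inv_mul s

theorem mul_mem_E {e f : S} (he : e ∈ E S) (hf : f ∈ E S) : e * f ∈ E S := by
  have he' : e * e = e := he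
  have hf' : f * f = f := hf
  set x := (e * f)⁻¹
  have hx₁ : e * f * x * (e * f) = e * f := mul_inv_mul _
  have hx₂ : x * (e * f) * x = x := inv_mul_inv _
  -- `f x e` is an inverse of `e f`, so it equals `x`; this makes `x`, hence `e f = x⁻¹`,
  -- idempotent.
  have hfxe : f * x * e = x := by
    apply inv_unique (e * f)
    · calc e * f * (f * x * e) * (e * f) = e * (f * f) * x * (e * e) * f := by
            simp only [mul_assoc]
        _ = e * f * x * (e * f) := by rw [he', hf']; simp only [mul_assoc]
        _ = e * f := hx₁
    · calc f * x * e * (e * f) * (f * x * e) = f * (x * ((e * e) * (f * f)) * x) * e := by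
            simp only [mul_assoc]
        _ = f * x * e := by rw [he', hf', hx₂]
  have hxx : x * x = x :=
    calc x * x = f * x * e * (f * x * e) := by rw [hfxe]
      _ = f * (x * (e * f) * x) * e := by simp only [mul_assoc]
      _ = x := by rw [hx₂, hfxe]
  have hef : e * f = x :=
    calc e * f = x⁻¹ := (InverseSemigroup.inv_inv _).symm
      _ = x := inv_eq_self_of_mem_E hxx
  show e * f * (e * f) = e * f
  rw [hef, hxx]

theorem mul_comm_of_mem_E {e f : S} (he : e ∈ E S) (hf : f ∈ E S) : e * f = f * e := by
  have he' : e * e = e := he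
  have hf' : f * f = f := hf
  have hfe : f * e = (e * f)⁻¹ := by
    apply inv_unique
    · calc e * f * (f * e) * (e * f) = e * (f * f) * (e * e) * f := by simp only [mul_assoc]
        _ = e * f * (e * f) := by rw [he', hf']; simp only [mul_assoc]
        _ = e * f := mul_mem_E he hf
    · calc f * e * (e * f) * (f * e) = f * (e * e) * (f * f) * e := by simp only [mul_assoc]
        _ = f * e * (f * e) := by rw [he', hf']; simp only [mul_assoc]
        _ = f * e := mul_mem_E hf he
  rw [hfe, inv_eq_self_of_mem_E (mul_mem_E he hf)]

protected theorem mul_inv_rev (s t : S) : (s * t)⁻¹ = t⁻¹ * s⁻¹ := by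
  have hcomm : t * t⁻¹ * (s⁻¹ * s) = s⁻¹ * s * (t * t⁻¹) :=
    mul_comm_of_mem_E (r_mem_E t) (inv_mul_self_mem_E s)
  symm
  apply inv_unique
  · calc s * t * (t⁻¹ * s⁻¹) * (s * t) = s * (t * t⁻¹ * (s⁻¹ * s)) * t := by simp only [mul_assoc]
      _ = s * s⁻¹ * s * (t * t⁻¹ * t) := by rw [hcomm]; simp only [mul_assoc]
      _ = s * t := by rw [mul_inv_mul, mul_inv_mul]
  · calc t⁻¹ * s⁻¹ * (s * t) * (t⁻¹ * s⁻¹) = t⁻¹ * (s⁻¹ * s * (t * t⁻¹)) * s⁻¹ := by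
          simp only [mul_assoc]
      _ = t⁻¹ * t * t⁻¹ * (s⁻¹ * s * s⁻¹) := by rw [← hcomm]; simp only [mul_assoc]
      _ = t⁻¹ * s⁻¹ := by rw [inv_mul_inv, inv_mul_inv]

theorem r_mul (s t : S) : r (s * t) = s * r t * s⁻¹ := by
  show s * t * (s * t)⁻¹ = s * (t * t⁻¹) * s⁻¹
  rw [InverseSemigroup.mul_inv_rev]
  simp only [mul_assoc]

theorem conj_mul_conj {e f : S} (hf : f ∈ E S) (s : S) :
    s * e * s⁻¹ * (s * f * s⁻¹) = s * (e * f) * s⁻¹ :=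
  calc s * e * s⁻¹ * (s * f * s⁻¹) = s * (e * (s⁻¹ * s * f)) * s⁻¹ := by simp only [mul_assoc]
    _ = s * (e * f) * (s⁻¹ * s * s⁻¹) := by
        rw [mul_comm_of_mem_E (inv_mul_self_mem_E s) hf]; simp only [mul_assoc]
    _ = s * (e * f) * s⁻¹ := by rw [inv_mul_inv]

theorem r_of_mem_E {e : S} (he : e ∈ E S) : r e = e := by
  show e * e⁻¹ = e
  rw [inv_eq_self_of_mem_E he, he]

theorem r_idem_mul {e : S} (he : e ∈ E S) (s : S) : r (e * s) = e * r s :=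
  calc r (e * s) = e * (r s * e) := by rw [r_mul, inv_eq_self_of_mem_E he, mul_assoc]
    _ = e * r s := by rw [mul_comm_of_mem_E (r_mem_E s) he, ← mul_assoc, he]

theorem nle_refl (s : S) : nle s s := (mul_inv_mul s).symm

theorem nle_idem_mul {e : S} (he : e ∈ E S) (s : S) : nle (e * s) s := by
  show e * s = r (e * s) * s
  rw [r_idem_mul he, mul_assoc, r_mul_self]

theorem nle_update_idem_mul {ι : Type*} [DecidableEq ι] (x : ι → S) (i : ι) {e : S}
    (he : e ∈ E S) (j : ι) : nle (update x i (e * x i) j) (x j) := by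
  rcases eq_or_ne j i with rfl | hji
  · rw [update_self]
    exact nle_idem_mul he _
  · rw [update_of_ne hji]
    exact nle_refl _

theorem nle_of_forall_update_idem_mul {ι T A : Type*} [Fintype ι] [DecidableEq ι]
    [InverseSemigroup T] [InverseSemigroup A] (c : (ι → T) → A)
    (hc : ∀ x i, ∀ e ∈ E T, ∃ F ∈ E A, c (update x i (e * x i)) = F * c x)
    {x y : ι → T} (hxy : ∀ i, nle (x i) (y i)) : nle (c x) (c y) := by
  suffices h : ∀ s : Finset ι, ∃ F ∈ E A, c (s.piecewise x y) = F * c y by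
    obtain ⟨F, hF, hcx⟩ := h Finset.univ
    rw [Finset.piecewise_univ] at hcx
    rw [hcx]
    exact nle_idem_mul hF _
  intro s
  induction s using Finset.induction_on with
  | empty => exact ⟨r (c y), r_mem_E _, by rw [Finset.piecewise_empty, r_mul_self]⟩
  | insert i s hi ih =>
    obtain ⟨F, hF, hcF⟩ := ih
    have hxi : x i = r (x i) * s.piecewise x y i := by
      rw [Finset.piecewise_eq_of_notMem _ _ _ hi]
      exact hxy i
    obtain ⟨G, hG, hcG⟩ := hc (s.piecewise x y) i (r (x i)) (r_mem_E _)
    refine ⟨G * F, mul_mem_E hG hF, ?_⟩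
    rw [Finset.piecewise_insert, hxi, hcG, hcF, mul_assoc]

end InverseSemigroup

section TupleProd

variable {S : Type*} [InverseSemigroup S]

theorem tupleProd_update_zero_idem_mul {n : ℕ} (x : Fin (n + 1) → S) (e : S) :
    tupleProd (update x 0 (e * x 0)) = e * tupleProd x := by
  cases n with
  | zero => rfl
  | succ n =>
    have htail : (fun k : Fin (n + 1) => update x 0 (e * x 0) k.succ) = fun k => x k.succ :=
      funext fun k => update_of_ne (Fin.succ_ne_zero k) _ _
    simp only [tupleProd, update_self, htail, mul_assoc]

theorem r_tupleProd_update_idem_mul {n : ℕ} (x : Fin (n + 1) → S) (i : Fin (n + 1)) {e : S}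
    (he : e ∈ E S) :
    r (tupleProd (update x i (e * x i))) =
      r (((List.ofFn x).take (i : ℕ)).foldr (· * ·) e) * r (tupleProd x) := by
  induction n with
  | zero =>
    rw [Fin.fin_one_eq_zero i, tupleProd_update_zero_idem_mul, r_idem_mul he]
    simp only [Fin.val_zero, List.take_zero, List.foldr_nil, r_of_mem_E he]
  | succ n ih =>
    cases i using Fin.cases with
    | zero =>
      rw [tupleProd_update_zero_idem_mul, r_idem_mul he]
      simp only [Fin.val_zero, List.take_zero, List.foldr_nil, r_of_mem_E he]
    | succ j =>
      have htail : (fun k : Fin (n + 1) => update x j.succ (e * x j.succ) k.succ) =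
          update (fun k => x k.succ) j (e * x j.succ) :=
        update_comp_eq_of_injective x (Fin.succ_injective _) j _
      have hhead : update x j.succ (e * x j.succ) 0 = x 0 :=
        update_of_ne (Fin.succ_ne_zero j).symm _ _
      simp only [tupleProd, hhead, htail, r_mul, ih _ j, Fin.val_succ, List.ofFn_succ,
        List.take_succ_cons, List.foldr_cons]
      exact (conj_mul_conj (r_mem_E _) (x 0)).symm

end TupleProd

theorem cochain_order_preserving_iff_general {T A : Type*} [InverseSemigroup T] [InverseSemigroup A]
    (θ : T → A)
    (hθE : ∀ e ∈ E T, θ e ∈ E A)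
    (hθmul : ∀ e ∈ E T, ∀ f ∈ E T, θ (e * f) = θ e * θ f)
    (m : ℕ) (c : (Fin (m + 1) → T) → A)
    (hc : ∀ x : Fin (m + 1) → T, c x * (c x)⁻¹ = θ (r (tupleProd x))) :
    (∀ x y : Fin (m + 1) → T, (∀ i, nle (x i) (y i)) → nle (c x) (c y)) ↔
      (∀ x : Fin (m + 1) → T, ∀ i : Fin (m + 1), ∀ e ∈ E T,
        c (Function.update x i (e * x i)) =
          θ (r (((List.ofFn x).take (i : ℕ)).foldr (· * ·) e)) * c x) := by
  constructor
  · intro hmono x i e he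
    calc c (update x i (e * x i))
        = c (update x i (e * x i)) * (c (update x i (e * x i)))⁻¹ * c x :=
          hmono _ _ (nle_update_idem_mul x i he)
      _ = θ (r (((List.ofFn x).take i).foldr (· * ·) e)) * (c x * (c x)⁻¹ * c x) := by
          rw [hc, r_tupleProd_update_idem_mul x i he, hθmul _ (r_mem_E _) _ (r_mem_E _), ← hc x,
            mul_assoc]
      _ = θ (r (((List.ofFn x).take i).foldr (· * ·) e)) * c x := by rw [mul_inv_mul]
  · intro h x y hxy
    refine nle_of_forall_update_idem_mul c (fun x i e he => ?_) hxy
    exact ⟨_, hθE _ (r_mem_E _), h x i e he⟩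

/-- An `n`-cochain is order-preserving iff
`c(x₁,…,e xᵢ,…,xₙ) = θ(r(x₁⋯x_{i-1} e)) c(x₁,…,xₙ)` for all idempotents `e`. -/
theorem cochain_order_preserving_iff {T A : Type*} [InverseSemigroup T] [InverseSemigroup A]
    (θ : T → A) (η : T → A → A)
    (hAcomm : ∀ a b : A, a * b = b * a)
    (hθE : ∀ e ∈ E T, θ e ∈ E A)
    (hθinj : ∀ e ∈ E T, ∀ f ∈ E T, θ e = θ f → e = f)
    (hθsurj : ∀ a ∈ E A, ∃ e ∈ E T, θ e = a)
    (hθmul : ∀ e ∈ E T, ∀ f ∈ E T, θ (e * f) = θ e * θ f)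
    (hηhom : ∀ t u : T, ∀ a : A, η (t * u) a = η t (η u a))
    (hηmul : ∀ t : T, ∀ a b : A, η t (a * b) = η t a * η t b)
    (hη1 : ∀ e ∈ E T, ∀ a : A, η e a = θ e * a)
    (hη2 : ∀ t : T, ∀ e ∈ E T, η t (θ e) = θ (t * e * t⁻¹))
    (m : ℕ) (c : (Fin (m + 1) → T) → A)
    (hc : ∀ x : Fin (m + 1) → T, c x * (c x)⁻¹ = θ (r (tupleProd x))) :
    (∀ x y : Fin (m + 1) → T, (∀ i, nle (x i) (y i)) → nle (c x) (c y)) ↔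
      (∀ x : Fin (m + 1) → T, ∀ i : Fin (m + 1), ∀ e ∈ E T,
        c (Function.update x i (e * x i)) =
          θ (r (((List.ofFn x).take (i : ℕ)).foldr (· * ·) e)) * c x) :=
  cochain_order_preserving_iff_general θ hθE hθmul m c hc
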